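/- Under the two-sample density ratio model with Conditions (i)–(iii), the normalized negative Hessian of the profile log empirical likelihood at the true parameter converges in probability: −n₁^{−1} ∂²ℓ_n(θ*)/∂θ∂θᵀ →p E₁[q(X) qᵀ(X)] as n₀, n₁ → ∞ with n₀/n₁ → ∞; in particular the limit is positive definite. -/

import Mathlib

/-!
With `e = exp (θ*ᵀ q)` and `ρ = n₁ / n₀`, every observation contributes `n₀⁻¹ e / (1 + ρ e)² q qᵀ`
to the normalized Hessian. Since `e / (1 + ρ e)² ≤ e` and `|e / (1 + ρ e)² - e| ≤ 2 ρ e²`, the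
Hessian differs from the `G₀`-sample mean of `e q qᵀ` by at most `ρ` times sample means of
`e² |q qᵀ|` (first sample) and `e |q qᵀ|` (second sample). Exponential moments in a ball make all
of these integrable (`x² ≤ 2 (eˣ + e⁻ˣ)`), so by the strong law the error vanishes almost surely
and the main term tends to `E₀[e q qᵀ] = E₁[q qᵀ]`. Positive definiteness passes from `E₀[q qᵀ]` to
`E₁[q qᵀ]` because the density ratio is positive, so `G₀ ≪ G₁`.
-/

open MeasureTheory ProbabilityTheory Filter
open scoped BigOperators Topology

noncomputable section

/-- The normalized negative Hessian `-n₁⁻¹ ∂²ℓ_n(θ)/∂θ∂θᵀ` of the dual/profile log empirical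
likelihood `ℓ_n(θ) = -Σ_{k,j} log[n₀ + n₁ exp(θᵀ q(x_{kj}))] + Σ_j θᵀ q(x_{1j})` of the
two-sample density ratio model. -/
def drmScaledNegHess {Ω : Type*} (d : ℕ) (q : ℝ → Fin (d + 1) → ℝ)
    (X : Fin 2 → ℕ → Ω → ℝ) (n₀ n₁ : ℕ) (θ : Fin (d + 1) → ℝ) (ω : Ω)
    (i j : Fin (d + 1)) : ℝ :=
  (n₁ : ℝ)⁻¹ * ∑ k : Fin 2, ∑ l ∈ Finset.range (![n₀, n₁] k),
    (n₀ : ℝ) * (n₁ : ℝ) * Real.exp (∑ a, θ a * q (X k l ω) a)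
      / ((n₀ : ℝ) + (n₁ : ℝ) * Real.exp (∑ a, θ a * q (X k l ω) a)) ^ 2
      * q (X k l ω) i * q (X k l ω) j

open Finset
open scoped Matrix

section ExponentialMoments

variable {α : Type*} [MeasurableSpace α] {μ : Measure α}

lemma sq_le_two_mul_exp_add_exp_neg (x : ℝ) : x ^ 2 ≤ 2 * (Real.exp x + Real.exp (-x)) := by
  have hquad := Real.quadratic_le_exp_of_nonneg (abs_nonneg x)
  have hcosh : Real.exp |x| ≤ Real.exp x + Real.exp (-x) := by
    rcases abs_cases x with ⟨hx, -⟩ | ⟨hx, -⟩ <;> rw [hx] <;>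
      linarith [Real.exp_pos x, Real.exp_pos (-x)]
  nlinarith [sq_abs x, abs_nonneg x]

lemma integrable_exp_mul_sq {g h : α → ℝ} (hg : Measurable g) (hh : Measurable h) {t : ℝ}
    (ht : t ≠ 0) (hpos : Integrable (fun x => Real.exp (g x + t * h x)) μ)
    (hneg : Integrable (fun x => Real.exp (g x + -t * h x)) μ) :
    Integrable (fun x => Real.exp (g x) * h x ^ 2) μ := by
  refine ((hpos.add hneg).const_mul (2 / t ^ 2)).mono' (by fun_prop) (.of_forall fun x => ?_)
  rw [Real.norm_of_nonneg (by positivity)]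
  calc Real.exp (g x) * h x ^ 2 = Real.exp (g x) * (t * h x) ^ 2 / t ^ 2 := by field_simp
    _ ≤ Real.exp (g x) * (2 * (Real.exp (t * h x) + Real.exp (-(t * h x)))) / t ^ 2 := by
      gcongr; exact sq_le_two_mul_exp_add_exp_neg _
    _ = 2 / t ^ 2 * (Real.exp (g x + t * h x) + Real.exp (g x + -t * h x)) := by
      rw [Real.exp_add, Real.exp_add, neg_mul]; ring

lemma integrable_mul_abs_mul {w f g : α → ℝ} (hw : Measurable w) (hw0 : 0 ≤ w)
    (hf : Measurable f) (hg : Measurable g) (hwf : Integrable (fun x => w x * f x ^ 2) μ)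
    (hwg : Integrable (fun x => w x * g x ^ 2) μ) :
    Integrable (fun x => w x * |f x * g x|) μ := by
  refine (hwf.add hwg).mono' (by fun_prop) (.of_forall fun x => ?_)
  have hfg : |f x * g x| ≤ f x ^ 2 + g x ^ 2 := by
    rw [abs_mul]
    nlinarith [two_mul_le_add_sq |f x| |g x|, sq_abs (f x), sq_abs (g x), abs_nonneg (f x),
      abs_nonneg (g x)]
  rw [Real.norm_of_nonneg (mul_nonneg (hw0 x) (abs_nonneg _)), Pi.add_apply, ← mul_add]
  exact mul_le_mul_of_nonneg_left hfg (hw0 x)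

variable {ι : Type*} [Fintype ι] [DecidableEq ι]

lemma integrable_exp_dotProduct_mul_abs_mul {q : α → ι → ℝ} (hq : Measurable q) {c : ι → ℝ}
    {ε : ℝ} (hε : 0 < ε)
    (hmom : ∀ θ : ι → ℝ, √(∑ a, (θ a - c a) ^ 2) < ε →
      Integrable (fun x => Real.exp (θ ⬝ᵥ q x)) μ)
    (i j : ι) : Integrable (fun x => Real.exp (c ⬝ᵥ q x) * |q x i * q x j|) μ := by
  have hshift : ∀ a s, |s| < ε → Integrable (fun x => Real.exp (c ⬝ᵥ q x + s * q x a)) μ := by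
    intro a s hs
    have hdist : ∑ b, ((c + Pi.single a s : ι → ℝ) b - c b) ^ 2 = s ^ 2 := by
      simp [Pi.single_apply, ite_pow]
    have h := hmom (c + Pi.single a s) (by rwa [hdist, Real.sqrt_sq_eq_abs])
    simpa [add_dotProduct, single_dotProduct] using h
  have hsq : ∀ a, Integrable (fun x => Real.exp (c ⬝ᵥ q x) * q x a ^ 2) μ := fun a =>
    integrable_exp_mul_sq (by fun_prop) (by fun_prop) (half_pos hε).ne'
      (hshift a _ (by rw [abs_of_pos (half_pos hε)]; linarith))
      (hshift a _ (by rw [abs_neg, abs_of_pos (half_pos hε)]; linarith))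
  exact integrable_mul_abs_mul (by fun_prop) (fun x => (Real.exp_pos _).le) (by fun_prop)
    (by fun_prop) (hsq i) (hsq j)

end ExponentialMoments

section WithDensity

variable {α : Type*} [MeasurableSpace α] {μ : Measure α} {w : α → ℝ}

lemma integral_withDensity_ofReal (hw : Measurable w) (hw0 : 0 ≤ w) (f : α → ℝ) :
    ∫ x, f x ∂μ.withDensity (fun x => ENNReal.ofReal (w x)) = ∫ x, w x * f x ∂μ := by
  rw [integral_withDensity_eq_integral_toReal_smul hw.ennreal_ofReal
    (.of_forall fun _ => ENNReal.ofReal_lt_top)]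
  simp only [ENNReal.toReal_ofReal (hw0 _), smul_eq_mul]

lemma integrable_withDensity_ofReal_iff (hw : Measurable w) (hw0 : 0 ≤ w) {f : α → ℝ} :
    Integrable f (μ.withDensity fun x => ENNReal.ofReal (w x)) ↔
      Integrable (fun x => w x * f x) μ := by
  rw [integrable_withDensity_iff hw.ennreal_ofReal (.of_forall fun _ => ENNReal.ofReal_lt_top)]
  simp only [ENNReal.toReal_ofReal (hw0 _), mul_comm]

end WithDensity

section SecondMoment

variable {α ι : Type*} [MeasurableSpace α] [Fintype ι] {q : α → ι → ℝ}

lemma sq_dotProduct_eq_sum (v w : ι → ℝ) :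
    (v ⬝ᵥ w) ^ 2 = ∑ i, ∑ j, v i * v j * (w i * w j) := by
  rw [sq, dotProduct, sum_mul_sum]
  exact sum_congr rfl fun i _ => sum_congr rfl fun j _ => by ring

lemma integrable_sq_dotProduct {μ : Measure α}
    (hint : ∀ i j, Integrable (fun x => q x i * q x j) μ) (v : ι → ℝ) :
    Integrable (fun x => (v ⬝ᵥ q x) ^ 2) μ := by
  simp only [sq_dotProduct_eq_sum]
  exact integrable_finsetSum _ fun i _ => integrable_finsetSum _ fun j _ =>
    (hint i j).const_mul _

lemma dotProduct_mulVec_secondMoment {μ : Measure α}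
    (hint : ∀ i j, Integrable (fun x => q x i * q x j) μ) (v : ι → ℝ) :
    v ⬝ᵥ (Matrix.of fun i j => ∫ x, q x i * q x j ∂μ) *ᵥ v = ∫ x, (v ⬝ᵥ q x) ^ 2 ∂μ := by
  simp only [sq_dotProduct_eq_sum]
  rw [integral_finsetSum _ fun i _ => integrable_finsetSum _ fun j _ => (hint i j).const_mul _]
  simp only [integral_finsetSum _ fun j _ => (hint _ j).const_mul _, integral_const_mul,
    dotProduct, Matrix.mulVec, Matrix.of_apply, mul_sum]
  exact sum_congr rfl fun i _ => sum_congr rfl fun j _ => by ring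

lemma posDef_secondMoment_of_absolutelyContinuous {μ ν : Measure α} (hνμ : ν ≪ μ)
    (hν : (Matrix.of fun i j => ∫ x, q x i * q x j ∂ν).PosDef)
    (hintν : ∀ i j, Integrable (fun x => q x i * q x j) ν)
    (hintμ : ∀ i j, Integrable (fun x => q x i * q x j) μ) :
    (Matrix.of fun i j => ∫ x, q x i * q x j ∂μ).PosDef := by
  refine .of_dotProduct_mulVec_pos ?_ fun v hv => ?_
  · ext i j
    simp [mul_comm]
  have hsq_nonneg : ∀ m : Measure α, 0 ≤ᵐ[m] fun x => (v ⬝ᵥ q x) ^ 2 :=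
    fun _ => .of_forall fun _ => sq_nonneg _
  have hνpos := hν.dotProduct_mulVec_pos hv
  rw [star_trivial, dotProduct_mulVec_secondMoment hintν, integral_pos_iff_support_of_nonneg_ae
    (hsq_nonneg ν) (integrable_sq_dotProduct hintν v)] at hνpos
  rw [star_trivial, dotProduct_mulVec_secondMoment hintμ, integral_pos_iff_support_of_nonneg_ae
    (hsq_nonneg μ) (integrable_sq_dotProduct hintμ v)]
  exact pos_of_ne_zero fun h => hνpos.ne' (hνμ h)

end SecondMoment

def sampleMean {β : Type*} (f : β → ℝ) (x : ℕ → β) (n : ℕ) : ℝ :=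
  (∑ l ∈ range n, f (x l)) / n

lemma ae_tendsto_sampleMean {Ω β : Type*} [MeasurableSpace Ω] [MeasurableSpace β]
    {P : Measure Ω} {μ : Measure β} {Y : ℕ → Ω → β} (hY : ∀ l, Measurable (Y l))
    (hindep : iIndepFun Y P) (hlaw : ∀ l, P.map (Y l) = μ) {f : β → ℝ} (hf : Measurable f)
    (hfi : Integrable f μ) :
    ∀ᵐ ω ∂P, Tendsto (sampleMean f fun l => Y l ω) atTop (𝓝 (∫ x, f x ∂μ)) := by
  have hident : ∀ l, IdentDistrib (fun ω => f (Y l ω)) (fun ω => f (Y 0 ω)) P P := fun l =>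
    (⟨(hY l).aemeasurable, (hY 0).aemeasurable, by rw [hlaw, hlaw]⟩ :
      IdentDistrib (Y l) (Y 0) P P).comp hf
  rw [← hlaw 0] at hfi ⊢
  rw [integral_map (hY 0).aemeasurable hf.aestronglyMeasurable]
  exact strong_law_ae_real _ (hfi.comp_measurable (hY 0))
    (fun l l' hll' => (hindep.indepFun hll').comp hf hf) hident

section Hessian

def drmWeight (N₀ N₁ e : ℝ) : ℝ := N₀ * e / (N₀ + N₁ * e) ^ 2

variable {N₀ N₁ e : ℝ}

lemma drmWeight_nonneg (h₀ : 0 ≤ N₀) (he : 0 ≤ e) : 0 ≤ drmWeight N₀ N₁ e := by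
  unfold drmWeight; positivity

lemma drmWeight_le (h₀ : 0 < N₀) (h₁ : 0 ≤ N₁) (he : 0 ≤ e) : drmWeight N₀ N₁ e ≤ e / N₀ := by
  rw [drmWeight, div_le_div_iff₀ (by positivity) h₀]
  have hN₁e : 0 ≤ N₁ * e := mul_nonneg h₁ he
  nlinarith [mul_nonneg (mul_nonneg hN₁e he) h₀.le, mul_nonneg (mul_nonneg hN₁e hN₁e) he]

lemma abs_drmWeight_sub_le (h₀ : 0 < N₀) (h₁ : 0 ≤ N₁) (he : 0 ≤ e) :
    |drmWeight N₀ N₁ e - e / N₀| ≤ 2 * N₁ * e ^ 2 / N₀ ^ 2 := by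
  rw [abs_sub_comm, abs_of_nonneg (sub_nonneg.2 (drmWeight_le h₀ h₁ he)), drmWeight,
    div_sub_div _ _ h₀.ne' (by positivity), div_le_div_iff₀ (by positivity) (by positivity)]
  have hN₁e : 0 ≤ N₁ * e := mul_nonneg h₁ he
  nlinarith [mul_nonneg (mul_nonneg hN₁e he) (mul_nonneg h₀.le hN₁e),
    mul_nonneg (mul_nonneg hN₁e he) (mul_nonneg hN₁e hN₁e),
    mul_nonneg (mul_nonneg hN₁e he) (mul_nonneg h₀.le h₀.le)]

lemma abs_sum_drmWeight_sub_le {n₀ n₁ : ℕ} (h₀ : 0 < n₀) (h₁ : 0 < n₁) {e₀ e₁ b₀ b₁ : ℕ → ℝ}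
    (he₀ : ∀ l, 0 ≤ e₀ l) (he₁ : ∀ l, 0 ≤ e₁ l) :
    |∑ l ∈ range n₀, drmWeight n₀ n₁ (e₀ l) * b₀ l + ∑ l ∈ range n₁, drmWeight n₀ n₁ (e₁ l) * b₁ l
        - (∑ l ∈ range n₀, e₀ l * b₀ l) / n₀| ≤
      n₁ / n₀ * (2 * ((∑ l ∈ range n₀, e₀ l ^ 2 * |b₀ l|) / n₀) +
        (∑ l ∈ range n₁, e₁ l * |b₁ l|) / n₁) := by
  have hN₀ : (0 : ℝ) < n₀ := by exact_mod_cast h₀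
  have hN₁ : (0 : ℝ) < n₁ := by exact_mod_cast h₁
  calc _ = |∑ l ∈ range n₀, (drmWeight n₀ n₁ (e₀ l) - e₀ l / n₀) * b₀ l +
        ∑ l ∈ range n₁, drmWeight n₀ n₁ (e₁ l) * b₁ l| := by
        rw [add_sub_right_comm, sum_div, ← sum_sub_distrib]
        congr 2
        exact sum_congr rfl fun l _ => by ring
    _ ≤ ∑ l ∈ range n₀, 2 * n₁ * e₀ l ^ 2 / n₀ ^ 2 * |b₀ l| +
        ∑ l ∈ range n₁, e₁ l / n₀ * |b₁ l| := by
        refine (abs_add_le _ _).trans (add_le_add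
          ((abs_sum_le_sum_abs _ _).trans (sum_le_sum fun l _ => ?_))
          ((abs_sum_le_sum_abs _ _).trans (sum_le_sum fun l _ => ?_)))
        · rw [abs_mul]
          gcongr
          exact abs_drmWeight_sub_le hN₀ hN₁.le (he₀ l)
        · rw [abs_mul, abs_of_nonneg (drmWeight_nonneg hN₀.le (he₁ l))]
          gcongr
          exact drmWeight_le hN₀ hN₁.le (he₁ l)
    _ = _ := by
        simp only [mul_add, sum_div, mul_sum]
        congr 1 <;> exact sum_congr rfl fun l _ => by field_simp

variable {Ω : Type*} {d : ℕ} {q : ℝ → Fin (d + 1) → ℝ} {X : Fin 2 → ℕ → Ω → ℝ}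
  {θ : Fin (d + 1) → ℝ} {ω : Ω} {i j : Fin (d + 1)}

lemma drmScaledNegHess_eq_sum_drmWeight {n₀ n₁ : ℕ} (h₁ : n₁ ≠ 0) :
    drmScaledNegHess d q X n₀ n₁ θ ω i j = ∑ k : Fin 2, ∑ l ∈ range (![n₀, n₁] k),
      drmWeight n₀ n₁ (Real.exp (θ ⬝ᵥ q (X k l ω))) * (q (X k l ω) i * q (X k l ω) j) := by
  rw [drmScaledNegHess, mul_sum]
  refine sum_congr rfl fun k _ => ?_
  rw [mul_sum]
  refine sum_congr rfl fun l _ => ?_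
  simp only [drmWeight, dotProduct]
  field_simp

lemma tendsto_drmScaledNegHess {n₀ n₁ : ℕ → ℕ} (hn₀ : Tendsto n₀ atTop atTop)
    (hn₁ : Tendsto n₁ atTop atTop) (hρ : Tendsto (fun n => (n₁ n : ℝ) / n₀ n) atTop (𝓝 0))
    {L A B : ℝ}
    (hL : Tendsto (sampleMean (fun x => Real.exp (θ ⬝ᵥ q x) * (q x i * q x j))
      fun l => X 0 l ω) atTop (𝓝 L))
    (hA : Tendsto (sampleMean (fun x => Real.exp (θ ⬝ᵥ q x) ^ 2 * |q x i * q x j|)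
      fun l => X 0 l ω) atTop (𝓝 A))
    (hB : Tendsto (sampleMean (fun x => Real.exp (θ ⬝ᵥ q x) * |q x i * q x j|)
      fun l => X 1 l ω) atTop (𝓝 B)) :
    Tendsto (fun n => drmScaledNegHess d q X (n₀ n) (n₁ n) θ ω i j) atTop (𝓝 L) := by
  have hbound := hρ.mul (((hA.comp hn₀).const_mul 2).add (hB.comp hn₁))
  rw [zero_mul] at hbound
  have hdiff : Tendsto (fun n => drmScaledNegHess d q X (n₀ n) (n₁ n) θ ω i j -
      sampleMean (fun x => Real.exp (θ ⬝ᵥ q x) * (q x i * q x j)) (fun l => X 0 l ω) (n₀ n))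
      atTop (𝓝 0) := by
    refine squeeze_zero_norm' ?_ hbound
    filter_upwards [hn₀.eventually_gt_atTop 0, hn₁.eventually_gt_atTop 0] with n h₀ h₁
    rw [drmScaledNegHess_eq_sum_drmWeight h₁.ne', Fin.sum_univ_two]
    exact abs_sum_drmWeight_sub_le h₀ h₁ (fun _ => (Real.exp_pos _).le)
      (fun _ => (Real.exp_pos _).le)
  simpa using hdiff.add (hL.comp hn₀)

lemma measurable_drmScaledNegHess [MeasurableSpace Ω] (hq : Measurable q)
    (hX : ∀ k l, Measurable (X k l)) (n₀ n₁ : ℕ) :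
    Measurable fun ω => drmScaledNegHess d q X n₀ n₁ θ ω i j := by
  refine (Finset.measurable_sum _ fun k _ => Finset.measurable_sum _ fun l _ => ?_).const_mul _
  have hqX : Measurable fun ω => q (X k l ω) := hq.comp (hX k l)
  fun_prop

end Hessian

lemma tendstoInMeasure_drmScaledNegHess {Ω : Type*} [MeasurableSpace Ω] {P : Measure Ω}
    [IsFiniteMeasure P] {d : ℕ} {G : Fin 2 → Measure ℝ} {q : ℝ → Fin (d + 1) → ℝ}
    (hq : Measurable q) {θ : Fin (d + 1) → ℝ}
    (hDRM : G 1 = (G 0).withDensity fun x => ENNReal.ofReal (Real.exp (θ ⬝ᵥ q x)))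
    {X : Fin 2 → ℕ → Ω → ℝ} (hX : ∀ k l, Measurable (X k l)) (hindep : ∀ k, iIndepFun (X k) P)
    (hlaw : ∀ k l, P.map (X k l) = G k) {n₀ n₁ : ℕ → ℕ} (hn₀ : Tendsto n₀ atTop atTop)
    (hn₁ : Tendsto n₁ atTop atTop) (hρ : Tendsto (fun n => (n₁ n : ℝ) / n₀ n) atTop (𝓝 0))
    {i j : Fin (d + 1)} (hsecond : Integrable (fun x => q x i * q x j) (G 1))
    (htilted : Integrable (fun x => Real.exp (θ ⬝ᵥ q x) * |q x i * q x j|) (G 1)) :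
    TendstoInMeasure P (fun n ω => drmScaledNegHess d q X (n₀ n) (n₁ n) θ ω i j) atTop
      (fun _ => ∫ x, q x i * q x j ∂(G 1)) := by
  have he : Measurable fun x => Real.exp (θ ⬝ᵥ q x) := by fun_prop
  have he0 : 0 ≤ fun x => Real.exp (θ ⬝ᵥ q x) := fun _ => (Real.exp_pos _).le
  have hB := ae_tendsto_sampleMean (hX 1) (hindep 1) (hlaw 1) (by fun_prop) htilted
  rw [hDRM, integrable_withDensity_ofReal_iff he he0] at hsecond htilted
  have hL := ae_tendsto_sampleMean (hX 0) (hindep 0) (hlaw 0) (by fun_prop) hsecond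
  have hA := ae_tendsto_sampleMean (hX 0) (hindep 0) (hlaw 0)
    (f := fun x => Real.exp (θ ⬝ᵥ q x) ^ 2 * |q x i * q x j|) (by fun_prop)
    (htilted.congr (.of_forall fun x => by ring))
  refine tendstoInMeasure_of_tendsto_ae
    (fun n => (measurable_drmScaledNegHess hq hX _ _).aestronglyMeasurable) ?_
  rw [hDRM, integral_withDensity_ofReal he he0]
  filter_upwards [hL, hA, hB] with ω hL hA hB using tendsto_drmScaledNegHess hn₀ hn₁ hρ hL hA hB

theorem drm_neg_hessian_lln_general
    (d : ℕ) {Ω : Type*} [MeasurableSpace Ω] (P : Measure Ω) [IsProbabilityMeasure P]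
    (G : Fin 2 → Measure ℝ)
    (q : ℝ → Fin (d + 1) → ℝ) (hqmeas : Measurable q)
    (θstar : Fin (d + 1) → ℝ)
    (hDRM : G 1 = (G 0).withDensity fun x => ENNReal.ofReal (Real.exp (∑ i, θstar i * q x i)))
    (X : Fin 2 → ℕ → Ω → ℝ) (hXmeas : ∀ k j, Measurable (X k j))
    (hindep : iIndepFun (fun p : Fin 2 × ℕ => X p.1 p.2) P)
    (hlaw : ∀ k j, Measure.map (X k j) P = G k)
    -- Condition (i)
    (n₀ n₁ : ℕ → ℕ)
    (hn₀ : Tendsto (fun n => (n₀ n : ℝ)) atTop atTop)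
    (hn₁ : Tendsto (fun n => (n₁ n : ℝ)) atTop atTop)
    (hratio : Tendsto (fun n => (n₀ n : ℝ) / (n₁ n : ℝ)) atTop atTop)
    -- Condition (ii)
    (hii : (Matrix.of fun i j => ∫ x, q x i * q x j ∂(G 0)).PosDef)
    -- Condition (iii)
    (hiii : ∃ ε > 0, ∀ θ : Fin (d + 1) → ℝ,
      (Real.sqrt (∑ i, (θ i - θstar i) ^ 2) < ε ∨ Real.sqrt (∑ i, (θ i) ^ 2) < ε) →
      Integrable (fun x => Real.exp (∑ i, θ i * q x i)) (G 0) ∧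
      Integrable (fun x => Real.exp (∑ i, θ i * q x i)) (G 1)) :
    (∀ i j : Fin (d + 1),
      TendstoInMeasure P
        (fun n ω => drmScaledNegHess d q X (n₀ n) (n₁ n) θstar ω i j) atTop
        (fun _ => ∫ x, q x i * q x j ∂(G 1))) ∧
    (Matrix.of fun i j => ∫ x, q x i * q x j ∂(G 1)).PosDef := by
  obtain ⟨ε, hε, hmom⟩ := hiii
  have hmomk : ∀ k θ, (√(∑ i, (θ i - θstar i) ^ 2) < ε ∨ √(∑ i, θ i ^ 2) < ε) →
      Integrable (fun x => Real.exp (θ ⬝ᵥ q x)) (G k) :=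
    Fin.forall_fin_two.2 ⟨fun θ h => (hmom θ h).1, fun θ h => (hmom θ h).2⟩
  have hsecond : ∀ k i j, Integrable (fun x => q x i * q x j) (G k) := fun k i j =>
    (integrable_norm_iff (by fun_prop)).1 <| by
      simpa using integrable_exp_dotProduct_mul_abs_mul (c := 0) hqmeas hε
        (fun θ hθ => hmomk k θ (.inr (by simpa using hθ))) i j
  have htilted : ∀ i j, Integrable (fun x => Real.exp (θstar ⬝ᵥ q x) * |q x i * q x j|) (G 1) :=
    integrable_exp_dotProduct_mul_abs_mul hqmeas hε fun θ hθ => hmomk 1 θ (.inl hθ)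
  have hρ : Tendsto (fun n => (n₁ n : ℝ) / n₀ n) atTop (𝓝 0) :=
    hratio.inv_tendsto_atTop.congr fun n => inv_div _ _
  have hG : G 0 ≪ G 1 := by
    rw [hDRM]
    exact withDensity_absolutelyContinuous' (by fun_prop)
      (.of_forall fun _ => by simp [Real.exp_pos])
  exact ⟨fun i j => tendstoInMeasure_drmScaledNegHess hqmeas hDRM hXmeas
      (fun k => hindep.precomp (g := Prod.mk k) (Prod.mk_right_injective k)) hlaw
      (tendsto_natCast_atTop_iff.1 hn₀) (tendsto_natCast_atTop_iff.1 hn₁) hρ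
      (hsecond 1 i j) (htilted i j),
    posDef_secondMoment_of_absolutelyContinuous hG hii (hsecond 0) (hsecond 1)⟩

/-- Under the two-sample density ratio model with Conditions (i)–(iii),
the normalized negative Hessian of the profile log empirical likelihood at the true
parameter converges in probability to `E₁[q(X) qᵀ(X)]` (entrywise), and the limit matrix
is positive definite. -/
theorem drm_neg_hessian_lln
    (d : ℕ) {Ω : Type*} [MeasurableSpace Ω] (P : Measure Ω) [IsProbabilityMeasure P]
    (G : Fin 2 → Measure ℝ) [∀ k, IsProbabilityMeasure (G k)]
    (q : ℝ → Fin (d + 1) → ℝ) (hqmeas : Measurable q)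
    (hq0 : ∀ x, q x 0 = 1)
    (θstar : Fin (d + 1) → ℝ)
    (hDRM : G 1 = (G 0).withDensity fun x => ENNReal.ofReal (Real.exp (∑ i, θstar i * q x i)))
    (X : Fin 2 → ℕ → Ω → ℝ) (hXmeas : ∀ k j, Measurable (X k j))
    (hindep : iIndepFun (fun p : Fin 2 × ℕ => X p.1 p.2) P)
    (hlaw : ∀ k j, Measure.map (X k j) P = G k)
    -- Condition (i)
    (n₀ n₁ : ℕ → ℕ)
    (hn₀ : Tendsto (fun n => (n₀ n : ℝ)) atTop atTop)
    (hn₁ : Tendsto (fun n => (n₁ n : ℝ)) atTop atTop)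
    (hratio : Tendsto (fun n => (n₀ n : ℝ) / (n₁ n : ℝ)) atTop atTop)
    -- Condition (ii)
    (hii : (Matrix.of fun i j => ∫ x, q x i * q x j ∂(G 0)).PosDef)
    -- Condition (iii)
    (hiii : ∃ ε > 0, ∀ θ : Fin (d + 1) → ℝ,
      (Real.sqrt (∑ i, (θ i - θstar i) ^ 2) < ε ∨ Real.sqrt (∑ i, (θ i) ^ 2) < ε) →
      Integrable (fun x => Real.exp (∑ i, θ i * q x i)) (G 0) ∧
      Integrable (fun x => Real.exp (∑ i, θ i * q x i)) (G 1)) :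
    (∀ i j : Fin (d + 1),
      TendstoInMeasure P
        (fun n ω => drmScaledNegHess d q X (n₀ n) (n₁ n) θstar ω i j) atTop
        (fun _ => ∫ x, q x i * q x j ∂(G 1))) ∧
    (Matrix.of fun i j => ∫ x, q x i * q x j ∂(G 1)).PosDef :=
  drm_neg_hessian_lln_general d P G q hqmeas θstar hDRM X hXmeas hindep hlaw n₀ n₁ hn₀ hn₁ hratio
    hii hiii
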